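/- arXiv:1510.08204 — 3 statements merged into one kernel-verified Lean document; each statement's English description precedes it below -/
import Mathlib

section
/- Let n ≥ 2 and let a, b, β, γ, δ be real numbers with a > b > 0, γ > δ, β > 0, and b - (δ/β)·a < 0 (equivalently b·β < δ·a). Consider the n×n matrix V whose first row is (a, b, b, ..., b), and whose i-th row for i ≥ 2 has β in the first column, γ on the diagonal, and δ in all other columns. Then V is nonsingular. -/
theorem stmt_2 (n : ℕ) (hn : 2 ≤ n) (a b β γ δ : ℝ)
    (hab : a > b) (hb : b > 0) (hβ : β > 0) (hγδ : γ > δ)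
    (hbd : b - (δ / β) * a < 0)
    (V : Matrix (Fin n) (Fin n) ℝ)
    (hV : V = Matrix.of fun i j =>
      if i = (⟨0, by omega⟩ : Fin n) then (if j = (⟨0, by omega⟩ : Fin n) then a else b)
      else if j = (⟨0, by omega⟩ : Fin n) then β
      else if i = j then γ else δ) :
    V.det ≠ 0 := by
  intro hdet
  rw [← Matrix.exists_mulVec_eq_zero_iff] at hdet
  obtain ⟨v, hv, hmul⟩ := hdet
  set z : Fin n := ⟨0, by omega⟩ with hz
  set o : Fin n := ⟨1, by omega⟩ with ho
  have hoz : o ≠ z := by simp [Fin.ext_iff, ho, hz]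
  set S : ℝ := ∑ j ∈ Finset.univ \ {z}, v j with hSdef
  have ha : (0:ℝ) < a := lt_trans hb hab
  -- row equation for i ≠ z
  have hrow : ∀ i : Fin n, i ≠ z → β * v z + δ * S + (γ - δ) * v i = 0 := by
    intro i hi
    have h := congrFun hmul i
    rw [hV] at h
    simp only [Matrix.mulVec, dotProduct, Matrix.of_apply, Pi.zero_apply,
      eq_self_iff_true, ite_true, if_neg hi] at h
    rw [Finset.sum_eq_sum_sdiff_singleton_add (Finset.mem_univ z)] at h
    have hsum : ∑ j ∈ Finset.univ \ {z},
        (if j = z then β else if i = j then γ else δ) * v j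
        = ∑ j ∈ Finset.univ \ {z}, (δ * v j + (if j = i then (γ - δ) * v j else 0)) := by
      apply Finset.sum_congr rfl
      intro j hj
      simp only [Finset.mem_sdiff, Finset.mem_singleton, Finset.mem_univ, true_and] at hj
      rw [if_neg hj]
      by_cases hij : i = j
      · subst hij; simp; ring
      · simp [hij, Ne.symm hij]
    rw [hsum, Finset.sum_add_distrib, ← Finset.mul_sum, Finset.sum_ite_eq'] at h
    have hiu : i ∈ Finset.univ \ {z} := by simp [hi]
    rw [if_pos hiu, if_pos (rfl : z = z)] at h
    rw [← hSdef] at h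
    linarith
  -- row equation for z
  have hrow0 : a * v z + b * S = 0 := by
    have h := congrFun hmul z
    rw [hV] at h
    simp only [Matrix.mulVec, dotProduct, Matrix.of_apply, Pi.zero_apply,
      eq_self_iff_true, ite_true] at h
    rw [Finset.sum_eq_sum_sdiff_singleton_add (Finset.mem_univ z)] at h
    have hsum : ∑ j ∈ Finset.univ \ {z},
        (if j = z then a else b) * v j
        = ∑ j ∈ Finset.univ \ {z}, b * v j := by
      apply Finset.sum_congr rfl
      intro j hj
      simp only [Finset.mem_sdiff, Finset.mem_singleton, Finset.mem_univ, true_and] at hj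
      rw [if_neg hj]
    rw [hsum, ← Finset.mul_sum, if_pos (rfl : z = z)] at h
    rw [← hSdef] at h
    linarith
  -- all non-first coordinates equal
  have ht : ∀ i : Fin n, i ≠ z → v i = v o := by
    intro i hi
    have h1 := hrow i hi
    have h2 := hrow o hoz
    have h3 : (γ - δ) * (v i - v o) = 0 := by ring_nf; ring_nf at h1 h2; linarith
    rcases mul_eq_zero.mp h3 with h | h
    · linarith
    · linarith
  set m : ℝ := ((n - 1 : ℕ) : ℝ) with hm
  have hScard : S = m * v o := by
    rw [hSdef]
    rw [Finset.sum_congr rfl (fun j hj => ht j (by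
      simp only [Finset.mem_sdiff, Finset.mem_singleton, Finset.mem_univ, true_and] at hj
      exact hj))]
    rw [Finset.sum_const, Finset.card_sdiff_of_subset (by simp), Finset.card_univ, Fintype.card_fin,
      Finset.card_singleton]
    simp [hm, nsmul_eq_mul]
  have hm1 : (1:ℝ) ≤ m := by
    rw [hm]
    exact_mod_cast Nat.one_le_iff_ne_zero.mpr (by omega)
  have hδa : b * β < δ * a := by
    have h1 : δ * a = (δ / β) * a * β := by field_simp
    nlinarith [mul_lt_mul_of_pos_right hbd hβ]
  have E1 : a * v z + b * (m * v o) = 0 := by rw [← hScard]; exact hrow0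
  have E2 : β * v z + δ * (m * v o) + (γ - δ) * v o = 0 := by
    have := hrow o hoz
    rw [hScard] at this
    linarith
  have key : v o * (a * δ * m + a * (γ - δ) - b * β * m) = 0 := by
    linear_combination a * E2 - β * E1
  have hcoef : 0 < a * δ * m + a * (γ - δ) - b * β * m := by nlinarith
  have hto : v o = 0 := by
    rcases mul_eq_zero.mp key with h | h
    · exact h
    · linarith
  have htz : v z = 0 := by
    rw [hto] at E1
    have : a * v z = 0 := by linarith
    exact (mul_eq_zero.mp this).resolve_left (ne_of_gt ha)
  apply hv
  funext i
  by_cases hi : i = z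
  · simp [hi, htz]
  · simp [ht i hi, hto]
end

section
/- Let a > b > 0 and n ≥ 2, and define, in terms of a_n = a, b_n = b and coefficients c_n, d_n, a_{n-1}, b_{n-1} from the Gaussian model, β_n = b_n + a_n c_n a_{n-1} + (n-2) b_n c_n a_{n-1}, γ_n = a_n d_n + (n-2) b_n c_n b_{n-1}, δ_n = a_n c_n b_{n-1} + b_n d_n + (n-3) b_n c_n b_{n-1}. If a_n > b_n and a_{n-1} > b_{n-1} (with all coefficients positive), then γ_n > δ_n. -/
theorem stmt_3 (σ τ : ℝ) (hσ : 0 < σ) (hτ : 0 < τ) (n : ℕ) (hn : 2 ≤ n)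
    (ηn2 ηn12 an bn an1 bn1 γ2 cn dn βn γn δn : ℝ)
    (hηn2 : ηn2 = (1 / σ ^ 2 + ((n : ℝ) - 1) / (σ ^ 2 + τ ^ 2))⁻¹)
    (hηn12 : ηn12 = (1 / σ ^ 2 + ((n : ℝ) - 2) / (σ ^ 2 + τ ^ 2))⁻¹)
    (han : an = ηn2 / σ ^ 2)
    (hbn : bn = ηn2 / (σ ^ 2 + τ ^ 2))
    (han1 : an1 = ηn12 / σ ^ 2)
    (hbn1 : bn1 = ηn12 / (σ ^ 2 + τ ^ 2))
    (hγ2 : γ2 = (1 / τ ^ 2 + 1 / (ηn12 + σ ^ 2))⁻¹)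
    (hcn : cn = γ2 / (ηn12 + σ ^ 2))
    (hdn : dn = γ2 / τ ^ 2)
    (hβn : βn = bn + an * cn * an1 + ((n : ℝ) - 2) * bn * cn * an1)
    (hγn : γn = an * dn + ((n : ℝ) - 2) * bn * cn * bn1)
    (hδn : δn = an * cn * bn1 + bn * dn + ((n : ℝ) - 3) * bn * cn * bn1)
    (haabb : an > bn) (haabb1 : an1 > bn1)
    (hpos : 0 < an ∧ 0 < bn ∧ 0 < an1 ∧ 0 < bn1 ∧ 0 < cn ∧ 0 < dn ∧ 0 < βn) :
    γn > δn := by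
  obtain ⟨hA, hB, hA1, hB1, hC, hD, hBeta⟩ := hpos
  have hs : (0:ℝ) < σ ^ 2 := by positivity
  have ht : (0:ℝ) < τ ^ 2 := by positivity
  have hst : (0:ℝ) < σ ^ 2 + τ ^ 2 := by positivity
  have hn2 : (0:ℝ) ≤ (n : ℝ) - 2 := by
    have : (2:ℝ) ≤ (n : ℝ) := by exact_mod_cast hn
    linarith
  have hη : 0 < ηn12 := by
    rw [hηn12]
    apply inv_pos.mpr
    have h1 : (0:ℝ) < 1 / σ ^ 2 := by positivity
    have h2 : (0:ℝ) ≤ ((n : ℝ) - 2) / (σ ^ 2 + τ ^ 2) := div_nonneg hn2 hst.le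
    linarith
  have hγ2 : 0 < γ2 := by
    rw [hγ2]
    apply inv_pos.mpr
    have h1 : (0:ℝ) < 1 / τ ^ 2 := by positivity
    have h2 : (0:ℝ) < 1 / (ηn12 + σ ^ 2) := by positivity
    linarith
  have hkey : cn * bn1 < dn := by
    rw [hcn, hbn1, hdn]
    rw [div_mul_div_comm, div_lt_div_iff₀ (by positivity) ht]
    have h : ηn12 * τ ^ 2 < (ηn12 + σ ^ 2) * (σ ^ 2 + τ ^ 2) := by nlinarith
    nlinarith [mul_lt_mul_of_pos_left h hγ2]
  have hdiff : γn - δn = (an - bn) * (dn - cn * bn1) := by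
    rw [hγn, hδn]; ring
  have hprod : 0 < (an - bn) * (dn - cn * bn1) :=
    mul_pos (sub_pos.mpr haabb) (sub_pos.mpr hkey)
  linarith [hdiff ▸ hprod]
end

section
/- Let a > b > 0, τ > 0, and e > 0, and let g : ℝ^{n-1} → ℝ be Lipschitz with constant a in the L¹ norm. Suppose the affine maps y ↦ x̄(y) satisfy |x̄(y) - x̄(y')| ≤ e(1 + 2a/b)‖y - y'‖₁ for each coordinate function. Then the composite map M g(y) = (1/(bτ))(g(x̄(y) + ε) - a x̄₁(y) - b Σ_j x̄_j(y) - b x₁) satisfies |M g(y) - M g(y')| ≤ (1/(bτ)) · (1/b) · (e(na + (n-2)b)(b + 2a) + b²) · ‖y - y'‖₁ for all y, y' ∈ ℝ^{n-1}. -/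
/-- Key Lipschitz estimate inside Lemma 3: the composite map `M g` is Lipschitz
with the stated constant in the `L¹` norm on `ℝ^{n-1}`. -/
theorem stmt_11 (n : ℕ) (hn : 2 ≤ n) (a b τ e : ℝ)
    (hab : a > b) (hb : 0 < b) (hτ : 0 < τ) (he : 0 < e)
    (g : (Fin (n - 1) → ℝ) → ℝ)
    (hg : ∀ y y' : Fin (n - 1) → ℝ, |g y - g y'| ≤ a * ∑ i, |y i - y' i|)
    (xbar : (Fin (n - 1) → ℝ) → Fin (n - 1) → ℝ)
    (hxbar : ∀ (j : Fin (n - 1)) (y y' : Fin (n - 1) → ℝ),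
      |xbar y j - xbar y' j| ≤ e * (1 + 2 * a / b) * ∑ i, |y i - y' i|)
    (ε : Fin (n - 1) → ℝ)
    (M : ((Fin (n - 1) → ℝ) → ℝ) → (Fin (n - 1) → ℝ) → ℝ)
    (hM : ∀ y : Fin (n - 1) → ℝ, M g y =
      (1 / (b * τ)) * (g (fun i => xbar y i + ε i)
        - a * xbar y ⟨0, by omega⟩
        - b * ∑ j ∈ Finset.univ.erase (⟨0, by omega⟩ : Fin (n - 1)), xbar y j
        - b * y ⟨0, by omega⟩)) :
    ∀ y y' : Fin (n - 1) → ℝ,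
      |M g y - M g y'| ≤ (1 / (b * τ)) * (1 / b) *
        (e * ((n : ℝ) * a + ((n : ℝ) - 2) * b) * (b + 2 * a) + b ^ 2) *
        ∑ i, |y i - y' i| := by
  intro y y'
  have ha : (0:ℝ) < a := hb.trans hab
  set i0 : Fin (n - 1) := ⟨0, by omega⟩
  set S := ∑ i, |y i - y' i| with hSdef
  have hS : 0 ≤ S := Finset.sum_nonneg fun i _ => abs_nonneg _
  set E := e * (1 + 2 * a / b) with hEdef
  have hE : 0 ≤ E := by positivity
  -- coordinate bounds
  have hxb : ∀ j : Fin (n-1), |xbar y j - xbar y' j| ≤ E * S := fun j => hxbar j y y'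
  -- g bound
  have hgb := hg (fun i => xbar y i + ε i) (fun i => xbar y' i + ε i)
  simp only [add_sub_add_right_eq_sub] at hgb
  have h1 : ∑ i, |xbar y i - xbar y' i| ≤ ((n:ℝ) - 1) * (E * S) := by
    calc ∑ i, |xbar y i - xbar y' i| ≤ ∑ _i : Fin (n-1), E * S :=
          Finset.sum_le_sum fun i _ => hxb i
      _ = ((n - 1 : ℕ) : ℝ) * (E * S) := by
          simp [Finset.sum_const, nsmul_eq_mul]
      _ = ((n:ℝ) - 1) * (E * S) := by
          rw [Nat.cast_sub (by omega : 1 ≤ n)]; norm_num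
  have hgb2 : |g (fun i => xbar y i + ε i) - g (fun i => xbar y' i + ε i)|
      ≤ a * (((n:ℝ) - 1) * (E * S)) :=
    hgb.trans (mul_le_mul_of_nonneg_left h1 ha.le)
  -- erase sum bound
  have h2 : |(∑ j ∈ Finset.univ.erase i0, xbar y j)
      - ∑ j ∈ Finset.univ.erase i0, xbar y' j| ≤ ((n:ℝ) - 2) * (E * S) := by
    rw [← Finset.sum_sub_distrib]
    calc |∑ j ∈ Finset.univ.erase i0, (xbar y j - xbar y' j)|
        ≤ ∑ j ∈ Finset.univ.erase i0, |xbar y j - xbar y' j| :=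
          Finset.abs_sum_le_sum_abs _ _
      _ ≤ ∑ _j ∈ Finset.univ.erase i0, E * S := Finset.sum_le_sum fun j _ => hxb j
      _ = ((Finset.univ.erase i0).card : ℝ) * (E * S) := by
          simp [Finset.sum_const, nsmul_eq_mul]
      _ = ((n:ℝ) - 2) * (E * S) := by
          rw [Finset.card_erase_of_mem (Finset.mem_univ _)]
          simp only [Finset.card_univ, Fintype.card_fin]
          rw [Nat.cast_sub (by omega : 1 ≤ n - 1), Nat.cast_sub (by omega : 1 ≤ n)]
          push_cast
          ring
  have h3 : |y i0 - y' i0| ≤ S :=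
    Finset.single_le_sum (f := fun i => |y i - y' i|) (fun i _ => abs_nonneg _)
      (Finset.mem_univ i0)
  -- main computation
  rw [hM y, hM y', ← mul_sub, abs_mul,
    abs_of_pos (by positivity : (0:ℝ) < 1 / (b * τ))]
  have habs : ∀ p q r s : ℝ, |p - q - r - s| ≤ |p| + |q| + |r| + |s| := by
    intro p q r s
    calc |p - q - r - s| ≤ |p - q - r| + |s| := abs_sub _ _
      _ ≤ (|p - q| + |r|) + |s| := by gcongr; exact abs_sub _ _
      _ ≤ ((|p| + |q|) + |r|) + |s| := by gcongr; exact abs_sub _ _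
  have hD : |(g (fun i => xbar y i + ε i) - a * xbar y i0
        - b * ∑ j ∈ Finset.univ.erase i0, xbar y j - b * y i0)
      - (g (fun i => xbar y' i + ε i) - a * xbar y' i0
        - b * ∑ j ∈ Finset.univ.erase i0, xbar y' j - b * y' i0)|
      ≤ 1 / b * (e * ((n:ℝ) * a + ((n:ℝ) - 2) * b) * (b + 2 * a) + b ^ 2) * S := by
    have heq : (g (fun i => xbar y i + ε i) - a * xbar y i0
        - b * ∑ j ∈ Finset.univ.erase i0, xbar y j - b * y i0)
      - (g (fun i => xbar y' i + ε i) - a * xbar y' i0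
        - b * ∑ j ∈ Finset.univ.erase i0, xbar y' j - b * y' i0)
      = (g (fun i => xbar y i + ε i) - g (fun i => xbar y' i + ε i))
        - a * (xbar y i0 - xbar y' i0)
        - b * ((∑ j ∈ Finset.univ.erase i0, xbar y j)
            - ∑ j ∈ Finset.univ.erase i0, xbar y' j)
        - b * (y i0 - y' i0) := by ring
    rw [heq]
    have hstep := habs (g (fun i => xbar y i + ε i) - g (fun i => xbar y' i + ε i))
      (a * (xbar y i0 - xbar y' i0))
      (b * ((∑ j ∈ Finset.univ.erase i0, xbar y j)
          - ∑ j ∈ Finset.univ.erase i0, xbar y' j))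
      (b * (y i0 - y' i0))
    rw [abs_mul, abs_mul, abs_mul, abs_of_pos ha, abs_of_pos hb] at hstep
    have hb1 : a * |xbar y i0 - xbar y' i0| ≤ a * (E * S) :=
      mul_le_mul_of_nonneg_left (hxb i0) ha.le
    have hb2 : b * |(∑ j ∈ Finset.univ.erase i0, xbar y j)
        - ∑ j ∈ Finset.univ.erase i0, xbar y' j| ≤ b * (((n:ℝ) - 2) * (E * S)) :=
      mul_le_mul_of_nonneg_left h2 hb.le
    have hb3 : b * |y i0 - y' i0| ≤ b * S := mul_le_mul_of_nonneg_left h3 hb.le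
    have hconst : a * (((n:ℝ) - 1) * (E * S)) + a * (E * S)
        + b * (((n:ℝ) - 2) * (E * S)) + b * S
        = 1 / b * (e * ((n:ℝ) * a + ((n:ℝ) - 2) * b) * (b + 2 * a) + b ^ 2) * S := by
      rw [hEdef]; field_simp; ring
    linarith [hstep, hgb2, hb1, hb2, hb3]
  calc 1 / (b * τ) * |_| ≤ 1 / (b * τ)
      * (1 / b * (e * ((n:ℝ) * a + ((n:ℝ) - 2) * b) * (b + 2 * a) + b ^ 2) * S) := by
        exact mul_le_mul_of_nonneg_left hD (by positivity)
    _ = 1 / (b * τ) * (1 / b) *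
        (e * ((n:ℝ) * a + ((n:ℝ) - 2) * b) * (b + 2 * a) + b ^ 2) * S := by ring
end
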